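/- CPO of p-strategies (directed completeness part of the paper's CPO-enrichment corollary for predicative games): In a predicative-game structure 𝒯 with P = ⋃𝒯 over (U, ≈), let 𝒟 be a nonempty family of p-strategies on 𝒯 that is directed with respect to the partial order ≤ on p-strategies (g ≤ g̃ iff g ≍ g̃ and g ⊆ g̃). Then the union ⋃𝒟 is again a p-strategy on 𝒯; in particular it is the least upper bound of 𝒟 with respect to inclusion among the p-strategies on 𝒯. -/

import Mathlib

/-!
CPO of p-strategies: the directed-completeness part of the CPO-enrichment
corollary (Corollary 4.72) of "Game semantics of Martin-Löf type theory".
Positions are finite lists over a type `M` of moves.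
-/

namespace GameSemantics

variable {M : Type*}

/-- A set of positions is prefix-closed: every prefix of a member belongs to it. -/
def PrefClosed (X : Set (List M)) : Prop :=
  ∀ ⦃s t : List M⦄, s <+: t → t ∈ X → s ∈ X

/-- An identification of positions on `U` (axioms I1, I2, I3). -/
structure IsIdent (U : Set (List M)) (R : List M → List M → Prop) : Prop where
  mem_left : ∀ ⦃s t : List M⦄, R s t → s ∈ U
  mem_right : ∀ ⦃s t : List M⦄, R s t → t ∈ U
  refl : ∀ s ∈ U, R s s
  symm : ∀ ⦃s t : List M⦄, R s t → R t s
  trans : ∀ ⦃s t u : List M⦄, R s t → R t u → R s u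
  length_eq : ∀ ⦃s t : List M⦄, R s t → s.length = t.length
  init : ∀ ⦃s t : List M⦄ ⦃m n : M⦄, R (s ++ [m]) (t ++ [n]) → R s t
  extend : ∀ ⦃s t : List M⦄ (m : M), R s t → s ++ [m] ∈ U →
    ∃ n : M, t ++ [n] ∈ U ∧ R (s ++ [m]) (t ++ [n])

/-- A t-skeleton contained in `U`. -/
def TSkel (U S : Set (List M)) : Prop :=
  S ⊆ U ∧ S.Nonempty ∧ PrefClosed S ∧
    ∀ (s : List M) (m n n' : M), s ++ [m, n] ∈ S → s ++ [m, n'] ∈ S →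
      Even (s ++ [m, n]).length → n = n'

/-- Saturation of a t-skeleton w.r.t. `R` on `U`. -/
def Saturated (U : Set (List M)) (R : List M → List M → Prop)
    (S : Set (List M)) : Prop :=
  ∀ (s : List M) (m m' : M), s ++ [m] ∈ S → s ++ [m'] ∈ U →
    Odd (s ++ [m']).length → R (s ++ [m]) (s ++ [m']) → s ++ [m'] ∈ S

/-- Consistency `σ ≍ τ` of two t-skeletons. -/
def ConsistentPair (σ τ : Set (List M)) : Prop :=
  ∀ (s : List M) (m : M), s ++ [m] ∈ σ ∪ τ → Odd (s ++ [m]).length →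
    s ∈ σ ∩ τ → s ++ [m] ∈ σ ∩ τ

/-- `σ ≲ σ̃` for t-skeletons (predicative version, including consistency). -/
def PLe (R : List M → List M → Prop) (σ τ : Set (List M)) : Prop :=
  ConsistentPair σ τ ∧
    ∀ (s : List M) (m n : M), s ++ [m, n] ∈ σ → Even (s ++ [m, n]).length →
      ∀ (t : List M) (l : M), t ++ [l] ∈ τ → Odd (t ++ [l]).length →
        R (s ++ [m]) (t ++ [l]) →
        ∃ r : M, t ++ [l, r] ∈ τ ∧ R (s ++ [m, n]) (t ++ [l, r])

/-- `σ ≃ σ̃` for t-skeletons (predicative version). -/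
def PEquiv (R : List M → List M → Prop) (σ τ : Set (List M)) : Prop :=
  PLe R σ τ ∧ PLe R τ σ

/-- A predicative-game structure. -/
structure PGameStruct (U : Set (List M)) (R : List M → List M → Prop)
    (𝒯 : Set (Set (List M))) : Prop where
  nonempty : 𝒯.Nonempty
  tskel : ∀ σ ∈ 𝒯, TSkel U σ
  saturated : ∀ σ ∈ 𝒯, Saturated U R σ
  union_saturated : ∀ s ∈ ⋃₀ 𝒯, ∀ t ∈ U, R s t → t ∈ ⋃₀ 𝒯
  detjoin : ∀ 𝒮 ⊆ 𝒯, 𝒮.Nonempty →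
    (∀ σ ∈ 𝒮, ∀ τ ∈ 𝒮, ConsistentPair σ τ) →
    (∀ (s : List M) (m n n' : M), s ++ [m, n] ∈ ⋃₀ 𝒮 → s ++ [m, n'] ∈ ⋃₀ 𝒮 →
      Even (s ++ [m, n]).length → n = n') →
    ⋃₀ 𝒮 ∈ 𝒯
  downward : ∀ σ ∈ 𝒯, ∀ σ' : Set (List M), σ' ⊆ ⋃₀ 𝒯 → TSkel U σ' →
    Saturated U R σ' → ConsistentPair σ' σ → σ' ⊆ σ → σ' ∈ 𝒯
  horizontal : ∀ σ ∈ 𝒯, ∀ σ' : Set (List M), σ' ⊆ ⋃₀ 𝒯 → TSkel U σ' →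
    Saturated U R σ' → PEquiv R σ σ' → σ' ∈ 𝒯

/-- A t-skeleton `σ` implements a p-strategy `g`, written `σ ∝ g`. -/
def ImplP (R : List M → List M → Prop) (σ g : Set (List M)) : Prop :=
  σ ⊆ g ∧
    (∀ (s : List M) (m : M), s ++ [m] ∈ g → Odd (s ++ [m]).length → s ∈ σ →
      s ++ [m] ∈ σ) ∧
    ∀ (s : List M) (m n : M), s ++ [m, n] ∈ g → Even (s ++ [m, n]).length →
      s ∈ σ → ∃ n' : M, s ++ [m, n'] ∈ σ ∧ R (s ++ [m, n]) (s ++ [m, n'])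

/-- A p-strategy on the predicative-game structure `𝒯` (whose positions are
`⋃₀ 𝒯`): nonempty, prefix-closed, ST2 on even-length members, ST3, and
implemented by some t-skeleton in `𝒯` (PST). -/
def PStrategy (R : List M → List M → Prop) (𝒯 : Set (Set (List M)))
    (g : Set (List M)) : Prop :=
  g ⊆ ⋃₀ 𝒯 ∧ g.Nonempty ∧ PrefClosed g ∧
    (∀ (s t : List M) (m n l r : M), s ++ [m, n] ∈ g →
      Even (s ++ [m, n]).length → t ++ [l, r] ∈ g → Even (t ++ [l, r]).length →
      R (s ++ [m]) (t ++ [l]) → R (s ++ [m, n]) (t ++ [l, r])) ∧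
    (∀ s t : List M, s ∈ g → t ∈ ⋃₀ 𝒯 → R s t → t ∈ g) ∧
    ∃ σ ∈ 𝒯, ImplP R σ g

/-- A maximal consistent subset of `𝒯`. -/
def MaxConsistent (𝒯 𝒮 : Set (Set (List M))) : Prop :=
  𝒮 ⊆ 𝒯 ∧ 𝒮.Nonempty ∧ (∀ σ ∈ 𝒮, ∀ τ ∈ 𝒮, ConsistentPair σ τ) ∧
    ∀ 𝒮' : Set (Set (List M)), 𝒮 ⊆ 𝒮' → 𝒮' ⊆ 𝒯 →
      (∀ σ ∈ 𝒮', ∀ τ ∈ 𝒮', ConsistentPair σ τ) → 𝒮' = 𝒮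

/-- Consistency `g ≍ g̃` of two p-strategies: some maximal consistent subset
`𝒮 ⊆ 𝒯` contains both within its union, inclusively on odd-length positions. -/
def PStratConsistent (𝒯 : Set (Set (List M))) (g g' : Set (List M)) : Prop :=
  ∃ 𝒮 : Set (Set (List M)), MaxConsistent 𝒯 𝒮 ∧
    g ⊆ ⋃₀ 𝒮 ∧ g' ⊆ ⋃₀ 𝒮 ∧
    (∀ (s : List M) (m : M), s ++ [m] ∈ ⋃₀ 𝒮 → Odd (s ++ [m]).length →
      s ∈ g → s ++ [m] ∈ g) ∧
    (∀ (s : List M) (m : M), s ++ [m] ∈ ⋃₀ 𝒮 → Odd (s ++ [m]).length →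
      s ∈ g' → s ++ [m] ∈ g')

/-- The order `g ≤ g̃` on p-strategies: `g ≍ g̃` and `g ⊆ g̃`. -/
def PStratLe (𝒯 : Set (Set (List M))) (g g' : Set (List M)) : Prop :=
  PStratConsistent 𝒯 g g' ∧ g ⊆ g'

/-- helper: every nonempty list is a snoc. -/
lemma eq_snoc {z : List M} (h : z ≠ []) : ∃ zd a, z = zd ++ [a] :=
  ⟨z.dropLast, z.getLast h, (List.dropLast_append_getLast h).symm⟩

lemma snoc_inj {a b : List M} {x y : M} (h : a ++ [x] = b ++ [y]) :
    a = b ∧ x = y := by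
  have := List.append_inj' h rfl
  simpa using this

lemma prefix_snoc_cases {v z : List M} {x : M} (h : v <+: z ++ [x]) :
    v = z ++ [x] ∨ v <+: z := List.prefix_concat_iff.mp h

/-- Canonical-response specification used by the mirror construction. -/
def Spec (U G σs : Set (List M)) (R : List M → List M → Prop) (P : List M)
    (z : List M) (c : M) : Prop :=
  z ++ [c] ∈ U ∧
  (∀ y l, R z y → y ++ [l] ∈ G → R (z ++ [c]) (y ++ [l])) ∧
  (∀ c', z ++ [c'] ∈ σs → c' = c) ∧
  (∀ c', z ++ [c'] <+: P → c' = c)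

/-- The mirror of the t-skeleton `τ`, rebased along `R`, following the
responses of `σs` and of the branch `P` wherever possible. -/
inductive Mir (U G σs : Set (List M)) (R : List M → List M → Prop) (P : List M)
    (τ : Set (List M)) : List M → List M → Prop
  | nil : Mir U G σs R P τ [] []
  | odd {z zbar : List M} {l l' : M} :
      Mir U G σs R P τ z zbar → z ++ [l] ∈ U → zbar ++ [l'] ∈ τ →
      R (z ++ [l]) (zbar ++ [l']) → Odd (z ++ [l]).length →
      Mir U G σs R P τ (z ++ [l]) (zbar ++ [l'])
  | even {z zbar : List M} {r' : M}
      (hm : Mir U G σs R P τ z zbar) (hτm : zbar ++ [r'] ∈ τ)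
      (hev : Even (zbar ++ [r']).length)
      (hs : ∃ c, Spec U G σs R P z c) :
      Mir U G σs R P τ (z ++ [hs.choose]) (zbar ++ [r'])

lemma mir_props {U G σs : Set (List M)} {R : List M → List M → Prop}
    {P : List M} {τ g : Set (List M)} (hR : IsIdent U R)
    (hτg : τ ⊆ g) (hgU : g ⊆ U) (hgG : g ⊆ G) (hτ0 : ([] : List M) ∈ τ)
    (hST3g : ∀ a b : List M, a ∈ g → b ∈ U → R a b → b ∈ g) :
    ∀ {z zbar : List M}, Mir U G σs R P τ z zbar →
      R z zbar ∧ zbar ∈ τ ∧ z ∈ g := by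
  intro z zbar hm
  induction hm with
  | nil => exact ⟨hR.refl [] (hgU (hτg hτ0)), hτ0, hτg hτ0⟩
  | odd hm' hUm hτm hRm hodd ih =>
      exact ⟨hRm, hτm, hST3g _ _ (hτg hτm) hUm (hR.symm hRm)⟩
  | even hm' hτm hev hs ih =>
      obtain ⟨hRz, hzbτ, hzg⟩ := ih
      obtain ⟨hcU, hc2, -, -⟩ := hs.choose_spec
      have hRc := hc2 _ _ hRz (hgG (hτg hτm))
      exact ⟨hRc, hτm, hST3g _ _ (hτg hτm) hcU (hR.symm hRc)⟩

lemma mir_prefix {U G σs : Set (List M)} {R : List M → List M → Prop}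
    {P : List M} {τ : Set (List M)} :
    ∀ {z zbar : List M}, Mir U G σs R P τ z zbar →
      ∀ v, v <+: z → ∃ y, Mir U G σs R P τ v y := by
  intro z zbar hm
  induction hm with
  | nil =>
      intro v hv
      rw [List.prefix_nil] at hv
      subst hv
      exact ⟨[], Mir.nil⟩
  | odd hm' hUm hτm hRm hodd ih =>
      intro v hv
      rcases prefix_snoc_cases hv with rfl | hv'
      · exact ⟨_, Mir.odd hm' hUm hτm hRm hodd⟩
      · exact ih v hv'
  | even hm' hτm hev hs ih =>
      intro v hv
      rcases prefix_snoc_cases hv with rfl | hv'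
      · exact ⟨_, Mir.even hm' hτm hev hs⟩
      · exact ih v hv'

lemma mir_inv {U G σs : Set (List M)} {R : List M → List M → Prop}
    {P : List M} {τ : Set (List M)} {w y : List M}
    (hm : Mir U G σs R P τ w y) :
    ∀ z c, w = z ++ [c] →
      ∃ zbar r', y = zbar ++ [r'] ∧ Mir U G σs R P τ z zbar ∧
        zbar ++ [r'] ∈ τ ∧
        ((w ∈ U ∧ R w (zbar ++ [r']) ∧ Odd w.length) ∨
         (Even (zbar ++ [r']).length ∧
           ∃ hs : ∃ c', Spec U G σs R P z c', c = hs.choose)) := by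
  cases hm with
  | nil => intro z c h; exact absurd h (by simp)
  | odd hm' hUm hτm hRm hodd =>
      intro z c h
      obtain ⟨rfl, rfl⟩ := snoc_inj h
      exact ⟨_, _, rfl, hm', hτm, Or.inl ⟨hUm, hRm, hodd⟩⟩
  | even hm' hτm hev hs =>
      intro z c h
      obtain ⟨rfl, rfl⟩ := snoc_inj h
      exact ⟨_, _, rfl, hm', hτm, Or.inr ⟨hev, hs, rfl⟩⟩

lemma mir_det {U G σs : Set (List M)} {R : List M → List M → Prop}
    {P : List M} {τ : Set (List M)} {z : List M} {c₁ c₂ : M} {y₁ y₂ : List M}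
    (h₁ : Mir U G σs R P τ (z ++ [c₁]) y₁) (h₂ : Mir U G σs R P τ (z ++ [c₂]) y₂)
    (hev : Even (z ++ [c₁]).length) : c₁ = c₂ := by
  obtain ⟨zb₁, r₁, rfl, hm₁, hτ₁, (⟨-, -, ho⟩ | ⟨-, hs₁, hc₁⟩)⟩ := mir_inv h₁ z c₁ rfl
  · exact ((Nat.not_odd_iff_even.mpr hev) ho).elim
  obtain ⟨zb₂, r₂, rfl, hm₂, hτ₂, (⟨-, -, ho⟩ | ⟨-, hs₂, hc₂⟩)⟩ := mir_inv h₂ z c₂ rfl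
  · have : Even (z ++ [c₂]).length := by
      have h1 : (z ++ [c₁]).length = (z ++ [c₂]).length := by simp
      rwa [h1] at hev
    exact ((Nat.not_odd_iff_even.mpr this) ho).elim
  · rw [hc₁, hc₂]


/-- **CPO of p-strategies (directed completeness)**: the union of every nonempty
`≤`-directed family of p-strategies on a predicative-game structure `𝒯` is
again a p-strategy on `𝒯`, and it is the least upper bound of the family with
respect to inclusion among the p-strategies on `𝒯`. -/
theorem pstrategy_directed_union (U : Set (List M))
    (R : List M → List M → Prop) (hU : PrefClosed U) (hR : IsIdent U R)
    (𝒯 : Set (Set (List M))) (hPG : PGameStruct U R 𝒯)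
    (𝒟 : Set (Set (List M))) (h𝒟ne : 𝒟.Nonempty)
    (h𝒟mem : ∀ g ∈ 𝒟, PStrategy R 𝒯 g)
    (h𝒟dir : ∀ g ∈ 𝒟, ∀ g' ∈ 𝒟, ∃ h ∈ 𝒟, PStratLe 𝒯 g h ∧ PStratLe 𝒯 g' h) :
    PStrategy R 𝒯 (⋃₀ 𝒟) ∧ (∀ g ∈ 𝒟, g ⊆ ⋃₀ 𝒟) ∧
      ∀ h : Set (List M), PStrategy R 𝒯 h → (∀ g ∈ 𝒟, g ⊆ h) → ⋃₀ 𝒟 ⊆ h := by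
  classical
  -- basic facts about the union
  have hTU : ⋃₀ 𝒯 ⊆ U := by
    rintro x ⟨σ, hσ, hx⟩; exact (hPG.tskel σ hσ).1 hx
  have hGsub : ⋃₀ 𝒟 ⊆ ⋃₀ 𝒯 := by
    rintro x ⟨g, hg, hx⟩; exact (h𝒟mem g hg).1 hx
  have hGU : ⋃₀ 𝒟 ⊆ U := hGsub.trans hTU
  have hGne : (⋃₀ 𝒟).Nonempty := by
    obtain ⟨g, hg⟩ := h𝒟ne
    obtain ⟨x, hx⟩ := (h𝒟mem g hg).2.1
    exact ⟨x, g, hg, hx⟩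
  have hGpc : PrefClosed (⋃₀ 𝒟) := by
    rintro s t hst ⟨g, hg, ht⟩
    exact ⟨g, hg, (h𝒟mem g hg).2.2.1 hst ht⟩
  -- ST2 for the union, via directedness
  have st2G : ∀ (z y : List M) (c l : M), z ++ [c] ∈ ⋃₀ 𝒟 → y ++ [l] ∈ ⋃₀ 𝒟 →
      R z y → Odd z.length → R (z ++ [c]) (y ++ [l]) := by
    intro z y c l hz hy hzy hodd
    have hzne : z ≠ [] := by rintro rfl; simp [Nat.odd_iff] at hodd
    have hlen := hR.length_eq hzy
    have hyne : y ≠ [] := by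
      rintro rfl; exact hzne (List.length_eq_zero_iff.mp (by simpa using hlen))
    obtain ⟨zd, a, rfl⟩ := eq_snoc hzne
    obtain ⟨yd, b, rfl⟩ := eq_snoc hyne
    obtain ⟨g₁, hg₁, hz₁⟩ := hz
    obtain ⟨g₂, hg₂, hz₂⟩ := hy
    obtain ⟨h, hh, ⟨-, hsub₁⟩, ⟨-, hsub₂⟩⟩ := h𝒟dir g₁ hg₁ g₂ hg₂
    have hst2 := (h𝒟mem h hh).2.2.2.1
    have e₁ : zd ++ [a, c] = zd ++ [a] ++ [c] := by simp
    have e₂ : yd ++ [b, l] = yd ++ [b] ++ [l] := by simp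
    rw [Nat.odd_iff] at hodd
    simp only [List.length_append, List.length_cons, List.length_nil] at hodd hlen
    have hev₁ : Even (zd ++ [a, c]).length := by
      rw [Nat.even_iff]
      simp only [List.length_append, List.length_cons, List.length_nil]
      omega
    have hev₂ : Even (yd ++ [b, l]).length := by
      rw [Nat.even_iff]
      simp only [List.length_append, List.length_cons, List.length_nil]
      omega
    have := hst2 zd yd a c b l (by rw [e₁]; exact hsub₁ hz₁) hev₁
      (by rw [e₂]; exact hsub₂ hz₂) hev₂ hzy
    rw [e₁, e₂] at this
    exact this
  -- pulling odd moves of the union into a member strategy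
  have pullD : ∀ gg ∈ 𝒟, ∀ (x : List M) (l : M), x ∈ gg → x ++ [l] ∈ ⋃₀ 𝒟 →
      Odd (x ++ [l]).length → x ++ [l] ∈ gg := by
    intro gg hgg x l hx hxl hodd
    obtain ⟨g'', hg'', hx2⟩ := hxl
    obtain ⟨h, hh, ⟨⟨𝒮, hmax, hgg𝒮, hh𝒮, hpull, -⟩, -⟩, ⟨-, hsub₂⟩⟩ :=
      h𝒟dir gg hgg g'' hg''
    exact hpull x l (hh𝒮 (hsub₂ hx2)) hodd hx
  -- ST3 for the union
  have st3G : ∀ s t : List M, s ∈ ⋃₀ 𝒟 → t ∈ ⋃₀ 𝒯 → R s t → t ∈ ⋃₀ 𝒟 := by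
    rintro s t ⟨g, hg, hs⟩ ht hr
    exact ⟨g, hg, (h𝒟mem g hg).2.2.2.2.1 s t hs ht hr⟩
  -- A starting point for Zorn's lemma: an implementer of some member of 𝒟
  obtain ⟨g₀, hg₀⟩ := h𝒟ne
  obtain ⟨τ₀, hτ₀T, hτ₀sub, hτ₀odd, hτ₀even⟩ := (h𝒟mem g₀ hg₀).2.2.2.2.2
  -- Zorn's lemma on partial implementers
  obtain ⟨σs, hτ₀σs, hσsmax⟩ := zorn_subset_nonempty
    {σ : Set (List M) | σ ∈ 𝒯 ∧ σ ⊆ ⋃₀ 𝒟 ∧ ∀ (x : List M) (mm : M), x ∈ σ →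
      x ++ [mm] ∈ ⋃₀ 𝒟 → Odd (x ++ [mm]).length → x ++ [mm] ∈ σ}
    (by
      intro c hcZ hchain hcne
      refine ⟨⋃₀ c, ⟨?_, ?_, ?_⟩, fun s hs => Set.subset_sUnion_of_mem hs⟩
      · refine hPG.detjoin c (fun σ hσ => (hcZ hσ).1) hcne ?_ ?_
        · rintro σ hσ τ' hτ' s mm hsm hodd ⟨hsσ, hsτ⟩
          have hsmG : s ++ [mm] ∈ ⋃₀ 𝒟 := by
            rcases hsm with h | h
            · exact (hcZ hσ).2.1 h
            · exact (hcZ hτ').2.1 h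
          exact ⟨(hcZ hσ).2.2 s mm hsσ hsmG hodd, (hcZ hτ').2.2 s mm hsτ hsmG hodd⟩
        · rintro s mm n n' ⟨σ₁, hσ₁, h₁⟩ ⟨σ₂, hσ₂, h₂⟩ hev
          rcases eq_or_ne σ₁ σ₂ with rfl | hne
          · exact (hPG.tskel σ₁ (hcZ hσ₁).1).2.2.2 s mm n n' h₁ h₂ hev
          · rcases hchain hσ₁ hσ₂ hne with hsub | hsub
            · exact (hPG.tskel σ₂ (hcZ hσ₂).1).2.2.2 s mm n n' (hsub h₁) h₂ hev
            · exact (hPG.tskel σ₁ (hcZ hσ₁).1).2.2.2 s mm n n' h₁ (hsub h₂) hev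
      · rintro x ⟨σ, hσ, hx⟩
        exact (hcZ hσ).2.1 hx
      · rintro x mm ⟨σ, hσ, hx⟩ hxm hodd
        exact ⟨σ, hσ, (hcZ hσ).2.2 x mm hx hxm hodd⟩)
    τ₀
    (⟨hτ₀T, hτ₀sub.trans (Set.subset_sUnion_of_mem hg₀), by
      intro x mm hx hxm hodd
      exact hτ₀odd x mm (pullD g₀ hg₀ x mm (hτ₀sub hx) hxm hodd) hodd hx⟩)
  obtain ⟨hσsT, hσsG, hσscl⟩ := hσsmax.1
  obtain ⟨hσsU', hσsne, hσspc, hσsdet⟩ := hPG.tskel σs hσsT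
  -- σs implements the union
  have hImpl : ImplP R σs (⋃₀ 𝒟) := by
    refine ⟨hσsG, fun s mm hsm hodd hs => hσscl s mm hs hsm hodd, ?_⟩
    intro s m n hsmn hev hsσ
    have e2 : s ++ [m, n] = s ++ [m] ++ [n] := by simp
    have hsmG : s ++ [m] ∈ ⋃₀ 𝒟 := hGpc ⟨[n], e2.symm⟩ hsmn
    have hsEv : Even s.length := by
      rw [Nat.even_iff] at hev ⊢
      simp only [List.length_append, List.length_cons, List.length_nil] at hev
      omega
    have hsmOdd : Odd (s ++ [m]).length := by
      rw [Nat.odd_iff]; rw [Nat.even_iff] at hsEv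
      simp only [List.length_append, List.length_cons, List.length_nil]
      omega
    by_cases hex : ∃ n', s ++ [m] ++ [n'] ∈ σs
    · obtain ⟨n', hn'⟩ := hex
      have e : s ++ [m, n'] = s ++ [m] ++ [n'] := by simp
      refine ⟨n', by rw [e]; exact hn', ?_⟩
      rw [e, e2]
      rw [e2] at hsmn
      exact st2G (s ++ [m]) (s ++ [m]) n n' hsmn (hσsG hn')
        (hR.refl _ (hGU hsmG)) hsmOdd
    · exfalso
      obtain ⟨g, hg𝒟, hPg⟩ := hsmn
      obtain ⟨hgsub, hgne, hgpc, hgst2, hgst3, τ, hτT, hτsub, hτodd, hτeven⟩ :=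
        h𝒟mem g hg𝒟
      have hPg' : s ++ [m] ++ [n] ∈ g := by rw [← e2]; exact hPg
      obtain ⟨hτU, hτne, hτpc, hτdet⟩ := hPG.tskel τ hτT
      have hτ0 : ([] : List M) ∈ τ := hτpc List.nil_prefix hτne.choose_spec
      have hgU : g ⊆ U := hgsub.trans hTU
      have hgG : g ⊆ ⋃₀ 𝒟 := Set.subset_sUnion_of_mem hg𝒟
      have hST3g : ∀ a b : List M, a ∈ g → b ∈ U → R a b → b ∈ g := fun a b ha hb hr =>
        hgst3 a b ha (hPG.union_saturated a (hgsub ha) b hb hr) hr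
      set P : List M := s ++ [m] ++ [n] with hPdef
      have props : ∀ {z zbar : List M}, Mir U (⋃₀ 𝒟) σs R P τ z zbar →
          R z zbar ∧ zbar ∈ τ ∧ z ∈ g :=
        fun hm => mir_props hR hτsub hgU hgG hτ0 hST3g hm
      have hsmσ : s ++ [m] ∈ σs := hσscl s m hsσ hsmG hsmOdd
      -- the τ-response transport lemma
      have hτresp : ∀ (w' y : List M) (x : M), w' ++ [x] ∈ g → y ∈ τ → R w' y →
          Odd w'.length → ∃ r', y ++ [r'] ∈ τ ∧ R (w' ++ [x]) (y ++ [r']) := by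
        intro w' y x hwg hyτ hRwy hodd
        obtain ⟨c', hc'U, hRc'⟩ := hR.extend x hRwy (hgU hwg)
        have hc'g : y ++ [c'] ∈ g := hST3g _ _ hwg hc'U hRc'
        have hyne : y ≠ [] := by
          rintro rfl
          have := hR.length_eq hRwy
          rw [Nat.odd_iff] at hodd
          simp only [List.length_nil] at this
          omega
        obtain ⟨yd, b, rfl⟩ := eq_snoc hyne
        have e : yd ++ [b, c'] = yd ++ [b] ++ [c'] := by simp
        have hlen := hR.length_eq hRwy
        have hevlen : Even (yd ++ [b, c']).length := by
          rw [Nat.even_iff]; rw [Nat.odd_iff] at hodd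
          simp only [List.length_append, List.length_cons, List.length_nil] at hlen hodd ⊢
          omega
        obtain ⟨r', hr'τ, hRr'⟩ := hτeven yd b c' (by rw [e]; exact hc'g) hevlen
          (hτpc (List.prefix_append _ _) hyτ)
        have e' : yd ++ [b, r'] = yd ++ [b] ++ [r'] := by simp
        rw [e, e'] at hRr'
        exact ⟨r', by rw [← e']; rw [e'] ; exact (e' ▸ hr'τ), hR.trans hRc' hRr'⟩
      -- canonical responses exist
      have hspec : ∀ (z zbar : List M) (r' : M), Mir U (⋃₀ 𝒟) σs R P τ z zbar →
          zbar ++ [r'] ∈ τ → Odd z.length → ∃ c, Spec U (⋃₀ 𝒟) σs R P z c := by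
        intro z zbar r' hm hr' hodd
        obtain ⟨hRz, hzbτ, hzg⟩ := props hm
        have hzne : z ≠ [] := by rintro rfl; simp [Nat.odd_iff] at hodd
        obtain ⟨zd, a, hzd⟩ := eq_snoc hzne
        have hdet : ∀ c' c'' : M, z ++ [c'] ∈ σs → z ++ [c''] ∈ σs → c' = c'' := by
          intro c' c'' h1' h2'
          have e' : ∀ x : M, zd ++ [a, x] = z ++ [x] := by intro x; rw [hzd]; simp
          refine hσsdet zd a c' c'' (by rw [e']; exact h1') (by rw [e']; exact h2') ?_
          rw [Nat.even_iff]; rw [Nat.odd_iff] at hodd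
          rw [hzd] at hodd
          simp only [List.length_append, List.length_cons, List.length_nil] at hodd ⊢
          omega
        -- any even-length proper prefix of P lying over z is governed by σs
        have hprefσ : ∀ c' : M, z ++ [c'] <+: s ++ [m] → z ++ [c'] ∈ σs := by
          intro c' hpre
          rcases prefix_snoc_cases hpre with heq | hpre2
          · exfalso
            have hl := congrArg List.length heq
            rw [Nat.odd_iff] at hodd hsmOdd
            simp only [List.length_append, List.length_cons, List.length_nil] at hl hsmOdd
            omega
          · exact hσspc hpre2 hsσ
        by_cases h1 : ∃ c, z ++ [c] ∈ σs
        · obtain ⟨c, hc⟩ := h1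
          refine ⟨c, hGU (hσsG hc),
            fun y l hRy hyG => st2G z y c l (hσsG hc) hyG hRy hodd,
            fun c' hc' => hdet c' c hc' hc, ?_⟩
          intro c' hc'
          rcases prefix_snoc_cases hc' with heq | hpre
          · obtain ⟨hz2, -⟩ := snoc_inj heq
            exact absurd ⟨c, by rw [← hz2]; exact hc⟩ hex
          · exact hdet c' c (hprefσ c' hpre) hc
        · by_cases h2 : ∃ c, z ++ [c] <+: P
          · obtain ⟨c, hc⟩ := h2
            have hmemg : z ++ [c] ∈ g := hgpc hc hPg'
            refine ⟨c, hgU hmemg,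
              fun y l hRy hyG => st2G z y c l (hgG hmemg) hyG hRy hodd, ?_, ?_⟩
            · intro c' hc'
              rcases prefix_snoc_cases hc with heq | hpre
              · obtain ⟨hz2, -⟩ := snoc_inj heq
                exact absurd ⟨c', by rw [← hz2]; exact hc'⟩ hex
              · exact absurd ⟨c', hc'⟩ h1
            · intro c' hc'
              have t1 := List.prefix_iff_eq_take.mp hc'
              have t2 := List.prefix_iff_eq_take.mp hc
              have hl : (z ++ [c']).length = (z ++ [c]).length := by simp
              rw [hl] at t1
              exact (snoc_inj (t1.trans t2.symm)).2
          · obtain ⟨c, hcU, hRc⟩ := hR.extend r' (hR.symm hRz) (hτU hr')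
            have hmemg : z ++ [c] ∈ g := hST3g _ _ (hτsub hr') hcU hRc
            exact ⟨c, hcU,
              fun y l hRy hyG => st2G z y c l (hgG hmemg) hyG hRy hodd,
              fun c' hc' => absurd ⟨c', hc'⟩ h1,
              fun c' hc' => absurd ⟨c', hc'⟩ h2⟩
      -- the mirror skeleton ρ
      set ρ : Set (List M) := {z | ∃ y, Mir U (⋃₀ 𝒟) σs R P τ z y} with hρdef
      have hρg : ρ ⊆ g := by rintro z ⟨y, hm⟩; exact (props hm).2.2
      have hρU : ρ ⊆ U := hρg.trans hgU
      have hρcl : ∀ (x : List M) (l : M), x ∈ ρ → x ++ [l] ∈ ⋃₀ 𝒟 →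
          Odd (x ++ [l]).length → x ++ [l] ∈ ρ := by
        rintro x l ⟨y, hm⟩ hxl hodd
        obtain ⟨hRx, hyτ, hxg⟩ := props hm
        have hxlg : x ++ [l] ∈ g := pullD g hg𝒟 x l hxg hxl hodd
        obtain ⟨l', hl'U, hRl⟩ := hR.extend l hRx (hGU hxl)
        have hl'g : y ++ [l'] ∈ g := hST3g _ _ hxlg hl'U hRl
        have hl'odd : Odd (y ++ [l']).length := by
          have := hR.length_eq hRl
          rw [Nat.odd_iff] at hodd ⊢
          omega
        have hl'τ : y ++ [l'] ∈ τ := hτodd y l' hl'g hl'odd hyτ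
        exact ⟨y ++ [l'], Mir.odd hm (hGU hxl) hl'τ hRl hodd⟩
      have hρTS : TSkel U ρ := by
        refine ⟨hρU, ⟨[], [], Mir.nil⟩, ?_, ?_⟩
        · rintro v t hvt ⟨y, hm⟩
          exact mir_prefix hm v hvt
        · intro s0 m0 n0 n0' h1 h2 hev0
          have e : ∀ x : M, s0 ++ [m0, x] = s0 ++ [m0] ++ [x] := fun x => by simp
          rw [e n0] at h1 hev0
          rw [e n0'] at h2
          obtain ⟨y1, hm1⟩ := h1
          obtain ⟨y2, hm2⟩ := h2
          exact mir_det hm1 hm2 hev0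
      have hρsat : Saturated U R ρ := by
        rintro s0 m0 m0' ⟨y, hm⟩ h2U hodd hR'
        obtain ⟨zb, r0, rfl, hm', hτm, hdisj⟩ := mir_inv hm s0 m0 rfl
        rcases hdisj with ⟨hU0, hR0, ho0⟩ | ⟨hev0, -⟩
        · exact ⟨zb ++ [r0], Mir.odd hm' h2U hτm (hR.trans (hR.symm hR') hR0) hodd⟩
        · exfalso
          have hl := hR.length_eq hR'
          have hl2 := hR.length_eq (props hm).1
          rw [Nat.odd_iff] at hodd
          rw [Nat.even_iff] at hev0
          simp only [List.length_append, List.length_cons, List.length_nil] at hl hl2 hodd hev0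
          omega
      have hconsτρ : ConsistentPair τ ρ := by
        rintro s0 m0 hmem hodd ⟨h1, h2⟩
        rcases hmem with hmem | hmem
        · exact ⟨hmem, hρcl s0 m0 h2 (hgG (hτsub hmem)) hodd⟩
        · exact ⟨hτodd s0 m0 (hρg hmem) hodd h1, hmem⟩
      have hconsρτ : ConsistentPair ρ τ := by
        rintro s0 m0 hmem hodd ⟨h1, h2⟩
        rcases hmem with hmem | hmem
        · exact ⟨hmem, hτodd s0 m0 (hρg hmem) hodd h2⟩
        · exact ⟨hρcl s0 m0 h1 (hgG (hτsub hmem)) hodd, hmem⟩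
      have hconsσρ : ConsistentPair σs ρ := by
        rintro s0 m0 hmem hodd ⟨h1, h2⟩
        rcases hmem with hmem | hmem
        · exact ⟨hmem, hρcl s0 m0 h2 (hσsG hmem) hodd⟩
        · exact ⟨hσscl s0 m0 h1 (hgG (hρg hmem)) hodd, hmem⟩
      have hconsρσ : ConsistentPair ρ σs := by
        rintro s0 m0 hmem hodd ⟨h1, h2⟩
        rcases hmem with hmem | hmem
        · exact ⟨hmem, hσscl s0 m0 h2 (hgG (hρg hmem)) hodd⟩
        · exact ⟨hρcl s0 m0 h1 (hσsG hmem) hodd, hmem⟩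
      have hconsself : ∀ σ : Set (List M), ConsistentPair σ σ := by
        rintro σ s0 m0 hmem hodd hs0
        rcases hmem with h | h <;> exact ⟨h, h⟩
      -- ρ is equivalent to τ
      have hPLe1 : PLe R τ ρ := by
        refine ⟨hconsτρ, ?_⟩
        intro s0 m0 n0 hmem hev0 t l htl hodd hRml
        have e : s0 ++ [m0, n0] = s0 ++ [m0] ++ [n0] := by simp
        rw [e] at hmem hev0
        obtain ⟨y, hm⟩ := htl
        obtain ⟨hRt, hyτ, -⟩ := props hm
        have hs0odd : Odd (s0 ++ [m0]).length := by
          rw [Nat.odd_iff]; rw [Nat.even_iff] at hev0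
          simp only [List.length_append, List.length_cons, List.length_nil] at hev0 ⊢
          omega
        obtain ⟨r', hr'τ, hRr'⟩ := hτresp (s0 ++ [m0]) y n0 (hτsub hmem) hyτ
          (hR.trans hRml hRt) hs0odd
        have hzodd : Odd (t ++ [l]).length := hodd
        have hs := hspec (t ++ [l]) y r' hm hr'τ hzodd
        have hevy : Even (y ++ [r']).length := by
          have := hR.length_eq hRt
          rw [Nat.odd_iff] at hzodd
          rw [Nat.even_iff]
          simp only [List.length_append, List.length_cons, List.length_nil] at this hzodd ⊢
          omega
        have hstep := Mir.even hm hr'τ hevy hs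
        have e3 : t ++ [l, hs.choose] = t ++ [l] ++ [hs.choose] := by simp
        refine ⟨hs.choose, by rw [e3]; exact ⟨y ++ [r'], hstep⟩, ?_⟩
        have hc2 := hs.choose_spec.2.1 (s0 ++ [m0]) n0 (hR.symm hRml) (hgG (hτsub hmem))
        rw [e, e3]
        exact hR.symm hc2
      have hPLe2 : PLe R ρ τ := by
        refine ⟨hconsρτ, ?_⟩
        intro s0 m0 n0 hmem hev0 t l htl hodd hRml
        have e : s0 ++ [m0, n0] = s0 ++ [m0] ++ [n0] := by simp
        rw [e] at hmem hev0
        have hs0odd : Odd (s0 ++ [m0]).length := by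
          rw [Nat.odd_iff]; rw [Nat.even_iff] at hev0
          simp only [List.length_append, List.length_cons, List.length_nil] at hev0 ⊢
          omega
        obtain ⟨r', hr'τ, hRr'⟩ := hτresp (s0 ++ [m0]) (t ++ [l]) n0 (hρg hmem) htl
          hRml hs0odd
        have e3 : t ++ [l, r'] = t ++ [l] ++ [r'] := by simp
        rw [e]
        exact ⟨r', by rw [e3]; exact hr'τ, by rw [e3]; exact hRr'⟩
      have hρT : ρ ∈ 𝒯 :=
        hPG.horizontal τ hτT ρ (fun z hz => hGsub (hgG (hρg hz))) hρTS hρsat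
          ⟨hPLe1, hPLe2⟩
      -- the join σs ∪ ρ
      have hσ'T : σs ∪ ρ ∈ 𝒯 := by
        have h := hPG.detjoin {σs, ρ}
          (by rintro x (rfl | rfl); exacts [hσsT, hρT]) ⟨σs, by simp⟩
          (by
            rintro σ1 h1 σ2 h2
            rcases h1 with rfl | h1 <;> rcases h2 with rfl | h2
            · exact hconsself _
            · rw [Set.mem_singleton_iff] at h2; subst h2; exact hconsσρ
            · rw [Set.mem_singleton_iff] at h1; subst h1; exact hconsρσ
            · rw [Set.mem_singleton_iff] at h1 h2; subst h1; subst h2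
              exact hconsself _)
          (by
            intro s0 m0 n0 n0' h1 h2 hev0
            rw [Set.sUnion_pair] at h1 h2
            have e : ∀ x : M, s0 ++ [m0, x] = s0 ++ [m0] ++ [x] := fun x => by simp
            rw [e n0] at h1 hev0
            rw [e n0'] at h2
            have hcross : ∀ a b : M, s0 ++ [m0] ++ [a] ∈ σs → s0 ++ [m0] ++ [b] ∈ ρ →
                a = b := by
              intro a b ha hb
              obtain ⟨y, hm⟩ := hb
              obtain ⟨zb, r0, rfl, hm', hτm, hdisj⟩ := mir_inv hm (s0 ++ [m0]) b rfl
              rcases hdisj with ⟨-, -, ho⟩ | ⟨-, hs2, hc2⟩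
              · exfalso
                rw [Nat.even_iff] at hev0
                rw [Nat.odd_iff] at ho
                simp only [List.length_append, List.length_cons, List.length_nil] at hev0 ho
                omega
              · have := hs2.choose_spec.2.2.1 a ha
                rw [hc2, this]
            rcases h1 with h1 | h1 <;> rcases h2 with h2 | h2
            · exact hσsdet s0 m0 n0 n0' (by rw [← e n0] at h1; exact h1)
                (by rw [← e n0'] at h2; exact h2) (by rw [← e n0] at hev0; exact hev0)
            · exact hcross n0 n0' h1 h2
            · exact (hcross n0' n0 h2 h1).symm
            · obtain ⟨y1, hm1⟩ := h1
              obtain ⟨y2, hm2⟩ := h2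
              exact mir_det hm1 hm2 hev0)
        rwa [Set.sUnion_pair] at h
      -- σs ∪ ρ is a partial implementer extending σs
      have hσ'Z : σs ∪ ρ ∈ {σ : Set (List M) | σ ∈ 𝒯 ∧ σ ⊆ ⋃₀ 𝒟 ∧
          ∀ (x : List M) (mm : M), x ∈ σ → x ++ [mm] ∈ ⋃₀ 𝒟 →
            Odd (x ++ [mm]).length → x ++ [mm] ∈ σ} := by
        refine ⟨hσ'T, Set.union_subset hσsG (fun z hz => hgG (hρg hz)), ?_⟩
        rintro x mm (hx | hx) hxm hodd
        · exact Or.inl (hσscl x mm hx hxm hodd)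
        · exact Or.inr (hρcl x mm hx hxm hodd)
      have hσ'sub : σs ∪ ρ ⊆ σs := hσsmax.2 hσ'Z Set.subset_union_left
      -- walk down the branch P inside ρ
      have hwalk : ∀ k, k ≤ P.length → ∃ y, Mir U (⋃₀ 𝒟) σs R P τ (P.take k) y := by
        intro k
        induction k with
        | zero => intro _; exact ⟨[], by rw [List.take_zero]; exact Mir.nil⟩
        | succ k ih =>
            intro hk1
            have hk : k < P.length := hk1
            obtain ⟨y, hm⟩ := ih (le_of_lt hk)
            obtain ⟨hRv, hyτ, hvg⟩ := props hm
            have hva : P.take k ++ [P[k]] = P.take (k + 1) := by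
              rw [← List.concat_eq_append]
              exact List.take_concat_get hk
            have hlenv : (P.take k).length = k := by
              rw [List.length_take]; omega
            have hvaP : P.take k ++ [P[k]] <+: P := by
              rw [hva]; exact List.take_prefix _ _
            have hvag : P.take k ++ [P[k]] ∈ g := hgpc hvaP hPg'
            rcases Nat.even_or_odd k with hke | hko
            · obtain ⟨l', hl'U, hRl⟩ := hR.extend P[k] hRv (hgU hvag)
              have hl'g : y ++ [l'] ∈ g := hST3g _ _ hvag hl'U hRl
              have hlodd : Odd (P.take k ++ [P[k]]).length := by
                rw [Nat.odd_iff]; rw [Nat.even_iff] at hke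
                simp only [List.length_append, List.length_cons, List.length_nil, hlenv]
                omega
              have hl'odd : Odd (y ++ [l']).length := by
                have := hR.length_eq hRl
                rw [Nat.odd_iff] at hlodd ⊢
                omega
              have hl'τ : y ++ [l'] ∈ τ := hτodd y l' hl'g hl'odd hyτ
              exact ⟨y ++ [l'], by rw [← hva]; exact Mir.odd hm (hgU hvag) hl'τ hRl hlodd⟩
            · have hvodd : Odd (P.take k).length := by rw [hlenv]; exact hko
              obtain ⟨r', hr'τ, hRr'⟩ := hτresp (P.take k) y P[k] hvag hyτ hRv hvodd
              have hs := hspec (P.take k) y r' hm hr'τ hvodd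
              have hevy : Even (y ++ [r']).length := by
                have := hR.length_eq hRv
                rw [Nat.odd_iff] at hvodd
                rw [Nat.even_iff]
                simp only [List.length_append, List.length_cons, List.length_nil] at this hvodd ⊢
                omega
              have hstep := Mir.even hm hr'τ hevy hs
              have hca : P[k] = hs.choose := hs.choose_spec.2.2.2 P[k] hvaP
              exact ⟨y ++ [r'], by rw [← hva, hca]; exact hstep⟩
      have hPρ : P ∈ ρ := by
        obtain ⟨y, hm⟩ := hwalk P.length le_rfl
        rw [List.take_length] at hm
        exact ⟨y, hm⟩
      exact hex ⟨n, hσ'sub (Or.inr hPρ)⟩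
  -- assemble the result
  refine ⟨⟨hGsub, hGne, hGpc, ?_, st3G, σs, hσsT, hImpl⟩,
    fun g hg => Set.subset_sUnion_of_mem hg,
    fun h _ hub => Set.sUnion_subset hub⟩
  intro s t m n l r h1 he1 h2 he2 hr
  have e1 : s ++ [m, n] = s ++ [m] ++ [n] := by simp
  have e2 : t ++ [l, r] = t ++ [l] ++ [r] := by simp
  rw [e1] at h1 he1
  rw [e2] at h2
  rw [e1, e2]
  refine st2G (s ++ [m]) (t ++ [l]) n r h1 h2 hr ?_
  rw [Nat.odd_iff]; rw [Nat.even_iff] at he1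
  simp only [List.length_append, List.length_cons, List.length_nil] at he1 ⊢
  omega


end GameSemantics
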